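/- Let φ be the piecewise linear function with breakpoints x_i^1 = 1 - 7·2^{-i-3}, x_i^2 = 1 - 5·2^{-i-3} and values φ_i^1 = 1 - 9·2^{-2i-3}, φ_i^2 = 1 - 3·2^{-2i-4} (φ(0)=0, φ(x)=1 for x ≥ 1, φ(x)=-x/2 for x<0). Then for every j ∈ ℕ, the point t_j := 1 - 2^{-j} lies in the interior of an affine piece of φ, φ is differentiable at t_j, and φ'(t_j) = -2^{-j}. -/

import Mathlib

open Filter Set Topology

noncomputable def xA (i : ℕ) : ℝ := 1 - 7 / 2 ^ (i + 3)
noncomputable def xB (i : ℕ) : ℝ := 1 - 5 / 2 ^ (i + 3)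
noncomputable def pA (i : ℕ) : ℝ := 1 - 9 / 2 ^ (2 * i + 3)
noncomputable def pB (i : ℕ) : ℝ := 1 - 3 / 2 ^ (2 * i + 4)

/-- `φ` is the piecewise linear function of Example 2.1: `φ(x) = -x/2` for `x < 0`,
`φ(x) = 1` for `x ≥ 1`, and on `[0,1)` the piecewise linear interpolation through
`(0,0)` and the nodes `(xA i, pA i)`, `(xB i, pB i)`. -/
def IsPhi (φ : ℝ → ℝ) : Prop :=
  (∀ x < (0:ℝ), φ x = -x / 2) ∧ (∀ x ≥ (1:ℝ), φ x = 1) ∧ φ 0 = 0 ∧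
  (∀ i, φ (xA i) = pA i) ∧ (∀ i, φ (xB i) = pB i) ∧
  (∀ x ∈ Set.Icc (0:ℝ) (xA 0), φ x = x * pA 0 / xA 0) ∧
  (∀ i, ∀ x ∈ Set.Icc (xA i) (xB i),
      φ x = pA i + (x - xA i) * (pB i - pA i) / (xB i - xA i)) ∧
  (∀ i, ∀ x ∈ Set.Icc (xB i) (xA (i + 1)),
      φ x = pB i + (x - xB i) * (pA (i + 1) - pB i) / (xA (i + 1) - xB i))

/-!
The point `1 - 2⁻ʲ` lies strictly between the nodes `xB (j - 1)` and `xA j`, so near it `φ` coincides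
with the chord through `(xB (j - 1), pB (j - 1))` and `(xA j, pA j)`. The chord's rise is
`-3 / 2 ^ (2j + 3)` over a run of `3 / 2 ^ (j + 3)`, i.e. its slope is `-2⁻ʲ`.
-/

theorem HasDerivAt.of_eqOn_chord {f : ℝ → ℝ} {x₀ x₁ y₀ y₁ t : ℝ}
    (hf : ∀ x ∈ Icc x₀ x₁, f x = y₀ + (x - x₀) * (y₁ - y₀) / (x₁ - x₀)) (ht : t ∈ Ioo x₀ x₁) :
    HasDerivAt f ((y₁ - y₀) / (x₁ - x₀)) t := by
  have hchord : HasDerivAt (fun x => y₀ + (x - x₀) * ((y₁ - y₀) / (x₁ - x₀)))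
      ((y₁ - y₀) / (x₁ - x₀)) t := by
    simpa using (((hasDerivAt_id t).sub_const x₀).mul_const ((y₁ - y₀) / (x₁ - x₀))).const_add y₀
  refine hchord.congr_of_eventuallyEq ?_
  filter_upwards [Ioo_mem_nhds ht.1 ht.2] with x hx
  rw [hf x (Ioo_subset_Icc_self hx), mul_div_assoc]

lemma xB_lt_one_sub (i : ℕ) : xB i < 1 - 1 / 2 ^ (i + 1) := by
  have : (0 : ℝ) < 2 ^ i := by positivity
  rw [xB, sub_lt_sub_iff_left, pow_succ, pow_add, div_lt_div_iff₀ (by positivity) (by positivity)]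
  nlinarith

lemma one_sub_lt_xA_succ (i : ℕ) : 1 - 1 / 2 ^ (i + 1) < xA (i + 1) := by
  have : (0 : ℝ) < 2 ^ i := by positivity
  rw [xA, sub_lt_sub_iff_left, show (2 : ℝ) ^ (i + 1 + 3) = 2 ^ i * 16 by ring, pow_succ,
    div_lt_div_iff₀ (by positivity) (by positivity)]
  nlinarith

lemma chord_slope_xB_xA_succ (i : ℕ) :
    (pA (i + 1) - pB i) / (xA (i + 1) - xB i) = -(1 / 2 ^ (i + 1)) := by
  simp only [xA, xB, pA, pB, two_mul, pow_add]
  field_simp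
  ring

theorem stmt15 (φ : ℝ → ℝ) (hφ : IsPhi φ) :
    ∀ j : ℕ, 1 ≤ j →
      xB (j - 1) < 1 - 1 / 2 ^ j ∧ (1 - 1 / 2 ^ j : ℝ) < xA j ∧
      HasDerivAt φ (-(1 / 2 ^ j)) (1 - 1 / 2 ^ j) := by
  obtain ⟨-, -, -, -, -, -, -, hchord⟩ := hφ
  intro j hj
  obtain ⟨i, rfl⟩ := Nat.exists_eq_add_of_le' hj
  rw [Nat.add_sub_cancel]
  refine ⟨xB_lt_one_sub i, one_sub_lt_xA_succ i, ?_⟩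
  rw [← chord_slope_xB_xA_succ]
  exact .of_eqOn_chord (hchord i) ⟨xB_lt_one_sub i, one_sub_lt_xA_succ i⟩
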